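/- arXiv:math/0606098 — 4 statements merged into one kernel-verified Lean document; each statement's English description precedes it below -/
import Mathlib

section
/- Let F be a homogeneous cubic polynomial in variables z0,z1,z2,z3 over an algebraically closed field k, and let M be a 3×3 matrix of linear forms with det M = c·F for some nonzero c. At every point P of the surface S = {F=0} where not all partial derivatives of F vanish, the matrix M(P) has rank exactly 2. -/
/-!
By Jacobi's formula, `∂(det M)/∂zᵢ = tr (adj M · ∂M/∂zᵢ)`, and the entries of `adj M` are the
`2 × 2` minors of `M`. If `M(P)` had rank at most one, all these minors would vanish at `P`, hence
so would the gradient of `det M = c·F`, contradicting smoothness of `P`. On the other hand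
`det M(P) = c·F(P) = 0`, so the rank is at most two.
-/

open MvPolynomial
open Matrix

theorem Derivation.leibniz_finset_prod {R A ι : Type*} [CommSemiring R] [CommRing A] [Algebra R A]
    [DecidableEq ι] (D : Derivation R A A) (s : Finset ι) (f : ι → A) :
    D (∏ i ∈ s, f i) = ∑ i ∈ s, (∏ j ∈ s.erase i, f j) * D (f i) := by
  induction s using Finset.induction_on with
  | empty => simp
  | insert a s ha ih =>
    rw [Finset.prod_insert ha, Derivation.leibniz, ih, Finset.sum_insert ha, Finset.erase_insert ha,
      smul_eq_mul, smul_eq_mul, Finset.mul_sum, add_comm]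
    congr 1
    refine Finset.sum_congr rfl fun i hi => ?_
    rw [Finset.erase_insert_of_ne (ne_of_mem_of_not_mem hi ha).symm,
      Finset.prod_insert fun h => ha (Finset.mem_of_mem_erase h), mul_assoc]

theorem Matrix.det_updateCol_eq_sum_prod_erase {n A : Type*} [Fintype n] [DecidableEq n]
    [CommRing A] (M : Matrix n n A) (j : n) (v : n → A) :
    (M.updateCol j v).det =
      ∑ σ : Equiv.Perm n, Equiv.Perm.sign σ • ((∏ i ∈ Finset.univ.erase j, M (σ i) i) * v (σ j)) := by
  rw [det_apply]
  refine Finset.sum_congr rfl fun σ _ => ?_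
  rw [← Finset.prod_erase_mul Finset.univ (fun i => M.updateCol j v (σ i) i) (Finset.mem_univ j),
    updateCol_self]
  congr 2
  exact Finset.prod_congr rfl fun i hi => updateCol_ne (M := M) (Finset.ne_of_mem_erase hi)

/-- Jacobi's formula for an arbitrary derivation. -/
theorem Derivation.map_det {R A n : Type*} [CommSemiring R] [CommRing A] [Algebra R A]
    [Fintype n] [DecidableEq n] (D : Derivation R A A) (M : Matrix n n A) :
    D M.det = (M.adjugate * M.map D).trace := by
  have hdiag : ∀ j, (M.adjugate * M.map D) j j = (M.updateCol j fun i => D (M i j)).det := by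
    intro j
    rw [← cramer_apply, cramer_eq_adjugate_mulVec]
    rfl
  simp only [trace, diag, hdiag, det_updateCol_eq_sum_prod_erase]
  rw [det_apply, map_sum, Finset.sum_comm]
  refine Finset.sum_congr rfl fun σ _ => ?_
  rw [Units.smul_def, map_zsmul, D.leibniz_finset_prod, Finset.smul_sum]
  rfl

theorem Matrix.rank_lt_card_of_det_eq_zero {K n : Type*} [Field K] [Fintype n] [DecidableEq n]
    {A : Matrix n n K} (h : A.det = 0) : A.rank < Fintype.card n := by
  obtain ⟨v, hv0, hv⟩ := exists_mulVec_eq_zero_iff.mpr h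
  have hker : 0 < Module.finrank K (LinearMap.ker A.mulVecLin) :=
    Module.finrank_pos_iff_exists_ne_zero.mpr ⟨⟨v, hv⟩, fun h0 => hv0 (congrArg Subtype.val h0)⟩
  have := A.mulVecLin.finrank_range_add_finrank_ker
  rw [Module.finrank_fintype_fun_eq_card] at this
  change Module.finrank K (LinearMap.range A.mulVecLin) < _
  omega

theorem Matrix.adjugate_eq_zero_of_rank_lt {R : Type*} [CommRing R] [IsDomain R] {n : ℕ}
    (A : Matrix (Fin (n + 1)) (Fin (n + 1)) R) (h : A.rank < n) : A.adjugate = 0 := by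
  ext i j
  have hminor : (A.submatrix j.succAbove i.succAbove).det = 0 := by
    by_contra hne
    have := (rank_of_det_ne_zero hne).symm.trans_le (rank_submatrix_le A j.succAbove i.succAbove)
    rw [Fintype.card_fin] at this
    omega
  rw [adjugate_fin_succ_eq_det_submatrix, hminor, mul_zero, zero_apply]

theorem MvPolynomial.eval_pderiv_det_eq_zero {σ R n : Type*} [CommRing R] [Fintype n]
    [DecidableEq n] (M : Matrix n n (MvPolynomial σ R)) (P : σ → R) (i : σ)
    (h : (M.map (eval P)).adjugate = 0) : eval P (pderiv i M.det) = 0 := by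
  rw [Derivation.map_det, AddMonoidHom.map_trace, ← RingHom.mapMatrix_apply, RingHom.map_mul,
    RingHom.map_adjugate, RingHom.mapMatrix_apply, h, Matrix.zero_mul, trace_zero]

theorem stmt0_general {k : Type*} [Field k]
    (F : MvPolynomial (Fin 4) k)
    (M : Matrix (Fin 3) (Fin 3) (MvPolynomial (Fin 4) k))
    (c : k) (hc : c ≠ 0) (hdet : M.det = C c * F)
    (P : Fin 4 → k) (hP : eval P F = 0)
    (hsm : ∃ i, eval P (pderiv i F) ≠ 0) :
    (M.map (eval P)).rank = 2 := by
  obtain ⟨i, hi⟩ := hsm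
  have hdetP : (M.map (eval P)).det = 0 := by
    rw [← RingHom.mapMatrix_apply, ← RingHom.map_det, hdet, map_mul, hP, mul_zero]
  have hle : (M.map (eval P)).rank < 3 := by
    simpa using rank_lt_card_of_det_eq_zero hdetP
  by_contra hne
  have hadj : (M.map (eval P)).adjugate = 0 := adjugate_eq_zero_of_rank_lt _ (by omega)
  have hgrad := eval_pderiv_det_eq_zero M P i hadj
  rw [hdet, pderiv_C_mul, map_mul, eval_C] at hgrad
  exact hi ((mul_eq_zero.mp hgrad).resolve_left hc)

/-- At every point of the cubic surface `F = 0` where not all partial derivatives of `F`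
vanish, a determinantal representation `M` (a 3×3 matrix of linear forms with
`det M = c·F`, `c ≠ 0`) has rank exactly 2. -/
theorem stmt0 {k : Type*} [Field k] [IsAlgClosed k]
    (F : MvPolynomial (Fin 4) k) (hF : F.IsHomogeneous 3)
    (M : Matrix (Fin 3) (Fin 3) (MvPolynomial (Fin 4) k))
    (hM : ∀ i j, (M i j).IsHomogeneous 1)
    (c : k) (hc : c ≠ 0) (hdet : M.det = C c * F)
    (P : Fin 4 → k) (hP : eval P F = 0)
    (hsm : ∃ i, eval P (pderiv i F) ≠ 0) :
    (M.map (eval P)).rank = 2 :=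
  stmt0_general F M c hc hdet P hP hsm
end

section
/- A smooth cubic surface in P³ admits no symmetric determinantal representation: there is no symmetric 3×3 matrix M of linear forms with det M = c·F, c ≠ 0, for F a smooth cubic form. (Equivalently: if M is a determinantal representation of a smooth cubic surface, then M is not equivalent to Mᵗ via M = Mᵗ.) -/
/-!
Write the symmetric matrix of linear forms as `z ↦ M(z)`, a linear map from `k⁴` to symmetric
`3 × 3` matrices. If `M(z) = v vᵀ` for some `z ≠ 0`, every `2 × 2` minor of `M(z)` vanishes, so
`det M` and all its partial derivatives vanish at `z`: `z` is a singular point of `F`.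

Such a `z` exists. Read in the coordinates `(S i j)_{i ≤ j}` of symmetric matrices, the image of
`M` is a `3`-plane of `P⁵` cut out by two linear equations; composed with the Veronese map
`v ↦ v vᵀ` these become two conics of `P²`, and two plane conics over an algebraically closed field
always meet: projecting the first one from one of its points parametrizes it by a binary quadratic
map, along which the second one restricts to a binary quartic, which has a root.
-/

open MvPolynomial Matrix

theorem exists_ne_zero_sum_mul_pow_eq_zero {k : Type*} [Field k] [IsAlgClosed k] {n : ℕ}
    (hn : n ≠ 0) (c : Fin (n + 1) → k) :
    ∃ s t : k, (s ≠ 0 ∨ t ≠ 0) ∧ ∑ i, c i * s ^ (i : ℕ) * t ^ (n - i) = 0 := by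
  by_cases hc : c (Fin.last n) = 0
  · refine ⟨1, 0, Or.inl one_ne_zero, ?_⟩
    rw [Fin.sum_univ_castSucc]
    simp [hc, Fin.is_lt, Nat.sub_ne_zero_of_lt]
  · set P : Polynomial k := ∑ i, Polynomial.C (c i) * Polynomial.X ^ (i : ℕ)
    have hcoeff : P.coeff n = c (Fin.last n) := by
      simp only [P, Polynomial.finsetSum_coeff, Polynomial.coeff_C_mul_X_pow]
      rw [Finset.sum_eq_single (Fin.last n)] <;> simp +contextual [Fin.ext_iff, eq_comm]
    have hdeg : P.degree ≠ 0 := by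
      have := Polynomial.le_degree_of_ne_zero (hcoeff ▸ hc)
      intro h
      rw [h] at this
      exact hn (Nat.le_zero.mp (by exact_mod_cast this))
    obtain ⟨r, hr⟩ := IsAlgClosed.exists_root P hdeg
    refine ⟨r, 1, Or.inr one_ne_zero, ?_⟩
    simpa [P, Polynomial.eval_finsetSum] using hr

theorem LinearIndependent.pair_smul_add_smul {k V : Type*} [Field k] [AddCommGroup V]
    [Module k V] {p u u' : V} (h : LinearIndependent k ![p, u, u']) {s t : k}
    (hst : s ≠ 0 ∨ t ≠ 0) : LinearIndependent k ![p, s • u + t • u'] := by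
  refine LinearIndependent.pair_iff.mpr fun a b hab => ?_
  have hcoeff := Fintype.linearIndependent_iff.mp h ![a, b * s, b * t]
    (by simpa [Fin.sum_univ_three, smul_add, smul_smul, add_assoc] using hab)
  have hs : b * s = 0 := hcoeff 1
  have ht : b * t = 0 := hcoeff 2
  refine ⟨hcoeff 0, ?_⟩
  rcases hst with hs' | ht'
  exacts [(mul_eq_zero.mp hs).resolve_right hs', (mul_eq_zero.mp ht).resolve_right ht']

namespace QuadraticMap
variable {R M N : Type*} [CommRing R] [AddCommGroup M] [Module R M] [AddCommGroup N] [Module R N]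

theorem map_smul_add_smul (Q : QuadraticMap R M N) (a b : R) (x y : M) :
    Q (a • x + b • y) = (a * a) • Q x + (b * b) • Q y + (a * b) • polar Q x y := by
  rw [QuadraticMap.map_add Q, Q.map_smul, Q.map_smul, polar_smul_left, polar_smul_right, smul_smul]

theorem map_smul_add_smul_add_smul (Q : QuadraticMap R M N) (a b c : R) (x y z : M) :
    Q (a • x + b • y + c • z) = (a * a) • Q x + (b * b) • Q y + (c * c) • Q z
      + (a * b) • polar Q x y + (a * c) • polar Q x z + (b * c) • polar Q y z := by
  rw [QuadraticMap.map_add Q, map_smul_add_smul, Q.map_smul, polar_add_left, polar_smul_left,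
    polar_smul_left, polar_smul_right, polar_smul_right, smul_smul, smul_smul]
  abel

theorem map_smul_sub_polar_smul (Q : QuadraticMap R M R) (p w : M) :
    Q (Q w • p - polar Q p w • w) = Q w ^ 2 * Q p := by
  rw [sub_eq_add_neg, ← neg_smul, map_smul_add_smul]
  simp only [smul_eq_mul]
  ring

variable {k V : Type*} [Field k] [AddCommGroup V] [Module k V] [IsAlgClosed k]

theorem exists_map_smul_add_smul_eq_zero (Q : QuadraticMap k V k) (x y : V) :
    ∃ a b : k, (a ≠ 0 ∨ b ≠ 0) ∧ Q (a • x + b • y) = 0 := by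
  obtain ⟨a, b, hab, h⟩ := exists_ne_zero_sum_mul_pow_eq_zero two_ne_zero ![Q y, polar Q x y, Q x]
  refine ⟨a, b, hab, ?_⟩
  rw [map_smul_add_smul]
  simp [Fin.sum_univ_succ] at h
  simp only [smul_eq_mul]
  linear_combination h

theorem exists_ne_zero_map_eq_zero_of_isotropic_line (Q₁ Q₂ : QuadraticMap k V k) {p w : V}
    (hpw : LinearIndependent k ![p, w]) (hp : Q₁ p = 0) (hw : Q₁ w = 0)
    (hpol : polar Q₁ p w = 0) : ∃ v ≠ 0, Q₁ v = 0 ∧ Q₂ v = 0 := by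
  obtain ⟨a, b, hab, h⟩ := exists_map_smul_add_smul_eq_zero Q₂ p w
  refine ⟨a • p + b • w, fun h0 => ?_, by simp [map_smul_add_smul, hp, hw, hpol], h⟩
  obtain ⟨rfl, rfl⟩ := LinearIndependent.pair_iff.mp hpw a b h0
  simp at hab

theorem exists_ne_zero_map_eq_zero_of_isotropic (Q₁ Q₂ : QuadraticMap k V k) {p u u' : V}
    (h : LinearIndependent k ![p, u, u']) (hp : Q₁ p = 0) : ∃ v ≠ 0, Q₁ v = 0 ∧ Q₂ v = 0 := by
  -- Projecting the conic `Q₁ = 0` from `p` parametrizes it by `w ↦ Q₁ w • p - polar Q₁ p w • w`,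
  -- quadratic in `w = s • u + t • u'`; on it `Q₂` is the binary quartic with coefficients below.
  set B := polar Q₁
  set α := Q₁ u • p - B p u • u
  set β := B u u' • p - B p u • u' - B p u' • u
  set γ := Q₁ u' • p - B p u' • u'
  obtain ⟨s, t, hst, hroot⟩ := exists_ne_zero_sum_mul_pow_eq_zero four_ne_zero
    ![Q₂ γ, polar Q₂ β γ, Q₂ β + polar Q₂ α γ, polar Q₂ α β, Q₂ α]
  set w := s • u + t • u'
  have hpw := h.pair_smul_add_smul hst
  have hparam : Q₁ w • p - B p w • w = (s * s) • α + (s * t) • β + (t * t) • γ := by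
    simp only [w, α, β, γ, B, map_smul_add_smul, polar_add_right, polar_smul_right, smul_eq_mul]
    module
  by_cases hv : Q₁ w • p - B p w • w = 0
  · obtain ⟨hw, hpol⟩ := LinearIndependent.pair_iff.mp hpw (Q₁ w) (-B p w)
      (by rwa [neg_smul, ← sub_eq_add_neg])
    exact exists_ne_zero_map_eq_zero_of_isotropic_line Q₁ Q₂ hpw hp hw (neg_eq_zero.mp hpol)
  · refine ⟨_, hv, by rw [map_smul_sub_polar_smul, hp, mul_zero], ?_⟩
    rw [hparam, map_smul_add_smul_add_smul]
    simp [Fin.sum_univ_succ] at hroot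
    simp only [smul_eq_mul]
    linear_combination hroot

theorem exists_ne_zero_map_eq_zero (Q₁ Q₂ : QuadraticMap k V k)
    (hV : 3 ≤ Module.finrank k V) : ∃ v ≠ 0, Q₁ v = 0 ∧ Q₂ v = 0 := by
  have : Nontrivial V := Module.nontrivial_of_finrank_pos (R := k) (by omega)
  obtain ⟨x, hx⟩ := exists_ne (0 : V)
  obtain ⟨y, hxy⟩ := exists_linearIndependent_pair_of_one_lt_finrank (R := k) (by omega) hx
  obtain ⟨a, b, hab, hp⟩ := exists_map_smul_add_smul_eq_zero Q₁ x y
  have hp0 : a • x + b • y ≠ 0 := fun h0 => by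
    obtain ⟨rfl, rfl⟩ := LinearIndependent.pair_iff.mp hxy a b h0
    simp at hab
  obtain ⟨u, hu⟩ := exists_linearIndependent_pair_of_one_lt_finrank (R := k) (by omega) hp0
  obtain ⟨u', hu'⟩ := exists_linearIndependent_snoc_of_lt_finrank hu hV
  have htriple : Fin.snoc ![a • x + b • y, u] u' = ![a • x + b • y, u, u'] := by
    ext i
    fin_cases i <;> rfl
  exact exists_ne_zero_map_eq_zero_of_isotropic Q₁ Q₂ (htriple ▸ hu') hp

end QuadraticMap

section Veronese
variable {k : Type*} [Field k]

-- Coordinates on symmetric matrices that need no division by `2`, so characteristic `2` is allowed.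
abbrev UpperPair (n : Type*) [LinearOrder n] := {p : n × n // p.1 ≤ p.2}

def Matrix.upperEntries (n : Type*) [LinearOrder n] : Matrix n n k →ₗ[k] (UpperPair n → k) where
  toFun A p := A p.1.1 p.1.2
  map_add' _ _ := rfl
  map_smul' _ _ := rfl

theorem Matrix.IsSymm.eq_of_upperEntries_eq {n : Type*} [LinearOrder n] {A B : Matrix n n k}
    (hA : A.IsSymm) (hB : B.IsSymm) (h : upperEntries n A = upperEntries n B) : A = B := by
  have hle : ∀ i j, i ≤ j → A i j = B i j := fun i j hij => congrFun h ⟨(i, j), hij⟩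
  ext i j
  rcases le_total i j with hij | hji
  · exact hle i j hij
  · rw [← hA.apply i j, ← hB.apply i j, hle j i hji]

def veronese (n : Type*) [LinearOrder n] : QuadraticMap k (n → k) (UpperPair n → k) :=
  QuadraticMap.linMulLin (LinearMap.funLeft k k fun p => p.1.1)
    (LinearMap.funLeft k k fun p => p.1.2)

theorem veronese_apply {n : Type*} [LinearOrder n] (v : n → k) :
    veronese n v = upperEntries n (vecMulVec v v) := rfl

variable [IsAlgClosed k] {V : Type*} [AddCommGroup V] [Module k V]

theorem exists_ne_zero_apply_eq_veronese (hV : Module.finrank k V = 4)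
    (Ψ : V →ₗ[k] (UpperPair (Fin 3) → k)) : ∃ z ≠ 0, ∃ v, Ψ z = veronese (Fin 3) v := by
  by_cases hinj : Function.Injective Ψ
  · have hquot : Module.finrank k ((UpperPair (Fin 3) → k) ⧸ LinearMap.range Ψ) = 2 := by
      have := Submodule.finrank_quotient_add_finrank (LinearMap.range Ψ)
      rw [LinearMap.finrank_range_of_inj hinj, hV, Module.finrank_fintype_fun_eq_card] at this
      have hcard : Fintype.card (UpperPair (Fin 3)) = 6 := by decide
      omega
    let L := (LinearEquiv.ofFinrankEq _ (Fin 2 → k) (by simpa using hquot)).toLinearMap ∘ₗ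
      (LinearMap.range Ψ).mkQ
    obtain ⟨v, hv, h0, h1⟩ := QuadraticMap.exists_ne_zero_map_eq_zero
      ((LinearMap.proj 0 ∘ₗ L).compQuadraticMap (veronese _))
      ((LinearMap.proj 1 ∘ₗ L).compQuadraticMap (veronese _)) (by simp)
    have hmem : veronese _ v ∈ LinearMap.range Ψ := by
      have hL : L (veronese _ v) = 0 := by
        ext j
        fin_cases j
        exacts [h0, h1]
      simpa [L] using hL
    obtain ⟨z, hz⟩ := hmem
    refine ⟨z, ?_, v, hz⟩
    rintro rfl
    apply hv
    ext i
    simpa [veronese] using (congrFun hz ⟨(i, i), le_rfl⟩).symm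
  · obtain ⟨z, hz, hz0⟩ := Submodule.exists_mem_ne_zero_of_ne_bot
      (mt LinearMap.ker_eq_bot.mp hinj)
    exact ⟨z, hz0, 0, by simpa using hz⟩

theorem exists_ne_zero_eq_vecMulVec_self (hV : Module.finrank k V = 4)
    (Φ : V →ₗ[k] Matrix (Fin 3) (Fin 3) k) (hΦ : ∀ z, (Φ z).IsSymm) :
    ∃ z ≠ 0, ∃ v, Φ z = vecMulVec v v := by
  obtain ⟨z, hz, v, hzv⟩ := exists_ne_zero_apply_eq_veronese hV (upperEntries _ ∘ₗ Φ)
  refine ⟨z, hz, v, (hΦ z).eq_of_upperEntries_eq ?_ (hzv.trans (veronese_apply v))⟩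
  exact IsSymm.ext fun i j => mul_comm _ _

end Veronese

section Determinant

variable {R σ : Type*} [CommRing R]

theorem MvPolynomial.IsHomogeneous.exists_linearMap_eval_eq [Fintype σ] {P : MvPolynomial σ R}
    (hP : P.IsHomogeneous 1) : ∃ ℓ : (σ → R) →ₗ[R] R, ∀ z, ℓ z = eval z P := by
  have hspan : P ∈ Submodule.span R (Set.range X) := by
    rw [← homogeneousSubmodule_one_eq_span_X]
    exact hP
  obtain ⟨c, rfl⟩ := Submodule.mem_span_range_iff_exists_fun R |>.mp hspan
  refine ⟨Fintype.linearCombination R c, fun z => ?_⟩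
  simp [Fintype.linearCombination_apply, mul_comm]

theorem Matrix.exists_linearMap_eq_map_eval [Fintype σ] {m n : Type*}
    (M : Matrix m n (MvPolynomial σ R)) (hM : ∀ i j, (M i j).IsHomogeneous 1) :
    ∃ Φ : (σ → R) →ₗ[R] Matrix m n R, ∀ z, Φ z = M.map (eval z) := by
  choose ℓ hℓ using fun i j => (hM i j).exists_linearMap_eval_eq
  exact ⟨LinearMap.pi fun i => LinearMap.pi fun j => ℓ i j, fun z => by ext i j; exact hℓ i j z⟩

theorem Matrix.eval_det_eq_zero_of_map_eval_eq_vecMulVec {n : Type*} [Fintype n] [DecidableEq n]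
    [Nontrivial n] {M : Matrix n n (MvPolynomial σ R)} {z : σ → R} {u v : n → R}
    (h : M.map (eval z) = vecMulVec u v) : eval z M.det = 0 := by
  rw [RingHom.map_det, RingHom.mapMatrix_apply, h, det_vecMulVec]

theorem Matrix.eval_pderiv_det_eq_zero_of_map_eval_eq_vecMulVec
    {M : Matrix (Fin 3) (Fin 3) (MvPolynomial σ R)} {z : σ → R} {u v : Fin 3 → R}
    (h : M.map (eval z) = vecMulVec u v) (i : σ) : eval z (pderiv i M.det) = 0 := by
  have hM : ∀ a b, eval z (M a b) = u a * v b := fun a b => congrFun (congrFun h a) b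
  rw [det_fin_three]
  simp only [map_add, map_sub, Derivation.leibniz, smul_eq_mul, _root_.map_mul, hM]
  ring

end Determinant

theorem stmt5_general {k : Type*} [Field k] [IsAlgClosed k]
    (F : MvPolynomial (Fin 4) k)
    (hsmooth : ∀ z : Fin 4 → k, z ≠ 0 → eval z F = 0 →
      ∃ i, eval z (pderiv i F) ≠ 0) :
    ¬ ∃ (M : Matrix (Fin 3) (Fin 3) (MvPolynomial (Fin 4) k)) (c : k),
        c ≠ 0 ∧ (∀ i j, (M i j).IsHomogeneous 1) ∧ M.det = C c * F ∧ Mᵀ = M := by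
  rintro ⟨M, c, hc, hlin, hdet, hsym⟩
  obtain ⟨Φ, hΦ⟩ := M.exists_linearMap_eq_map_eval hlin
  obtain ⟨z, hz, v, hzv⟩ := exists_ne_zero_eq_vecMulVec_self (by simp) Φ fun z => by
    rw [IsSymm, hΦ, ← transpose_map, hsym]
  rw [hΦ] at hzv
  have hF : eval z F = 0 := by
    have := eval_det_eq_zero_of_map_eval_eq_vecMulVec hzv
    rwa [hdet, eval_mul, eval_C, mul_eq_zero, or_iff_right hc] at this
  obtain ⟨i, hi⟩ := hsmooth z hz hF
  have := eval_pderiv_det_eq_zero_of_map_eval_eq_vecMulVec hzv i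
  rw [hdet, pderiv_C_mul, eval_mul, eval_C, mul_eq_zero, or_iff_right hc] at this
  exact hi this

/-- A smooth cubic surface admits no symmetric determinantal representation. -/
theorem stmt5 {k : Type*} [Field k] [IsAlgClosed k]
    (F : MvPolynomial (Fin 4) k) (hF3 : F.IsHomogeneous 3)
    (hsmooth : ∀ z : Fin 4 → k, z ≠ 0 → eval z F = 0 →
      ∃ i, eval z (pderiv i F) ≠ 0) :
    ¬ ∃ (M : Matrix (Fin 3) (Fin 3) (MvPolynomial (Fin 4) k)) (c : k),
        c ≠ 0 ∧ (∀ i j, (M i j).IsHomogeneous 1) ∧ M.det = C c * F ∧ Mᵀ = M :=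
  stmt5_general F hsmooth
end

section
/- Let M be the 3×3 matrix of linear forms with zero diagonal, entries (1,2)=z0+z1, (1,3)=z2+z3, (2,1)=ω·z2+z3, (2,3)=z0+ω·z1, (3,1)=ω·z0+z1, (3,2)=z2+ω·z3, where ω is a primitive third root of unity in ℂ. Then det M is a nonzero constant multiple of z0³+z1³+z2³+z3³. -/
open MvPolynomial

/-- The determinant of the hollow matrix of linear forms
`[[0, z0+z1, z2+z3],[ωz2+z3, 0, z0+ωz1],[ωz0+z1, z2+ωz3, 0]]`, where `ω` is a primitive
third root of unity, is a nonzero constant multiple of the Fermat cubic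
`z0³+z1³+z2³+z3³`. -/
theorem stmt9 (ω : ℂ) (hω : IsPrimitiveRoot ω 3)
    (M : Matrix (Fin 3) (Fin 3) (MvPolynomial (Fin 4) ℂ))
    (hM : M = Matrix.of ![![0, X 0 + X 1, X 2 + X 3],
        ![C ω * X 2 + X 3, 0, X 0 + C ω * X 1],
        ![C ω * X 0 + X 1, X 2 + C ω * X 3, 0]]) :
    ∃ c : ℂ, c ≠ 0 ∧ M.det = C c * (X 0 ^ 3 + X 1 ^ 3 + X 2 ^ 3 + X 3 ^ 3) := by
  have h3 : ω ^ 3 = 1 := hω.pow_eq_one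
  have h1 : ω ≠ 1 := by
    intro h; have := hω.pow_ne_one_of_pos_of_lt (l := 1) one_ne_zero (by norm_num)
    simp [h] at this
  have hrel : ω ^ 2 + ω + 1 = 0 := by
    have : (ω - 1) * (ω ^ 2 + ω + 1) = 0 := by linear_combination h3
    rcases mul_eq_zero.mp this with h | h
    · exact absurd (sub_eq_zero.mp h) h1
    · exact h
  refine ⟨ω, hω.ne_zero (by norm_num), ?_⟩
  subst hM
  rw [Matrix.det_fin_three]
  simp only [Matrix.of_apply, Matrix.cons_val', Matrix.cons_val_zero, Matrix.cons_val_one,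
    Matrix.head_cons, Matrix.empty_val', Matrix.cons_val_fin_one, Matrix.head_fin_const,
    Matrix.cons_val_two, Matrix.tail_cons]
  have hrelC : (C (ω ^ 2 + ω + 1) : MvPolynomial (Fin 4) ℂ) = 0 := by rw [hrel]; simp
  have : (C ω : MvPolynomial (Fin 4) ℂ) ^ 2 + C ω + 1 = 0 := by
    simpa [map_add, map_pow] using hrelC
  linear_combination (X 0 ^ 2 * X 1 + X 0 * X 1 ^ 2 + X 2 ^ 2 * X 3 + X 2 * X 3 ^ 2 : MvPolynomial (Fin 4) ℂ) * this
end

section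
/- Let A be an m×n matrix of linear forms on P² (entries linear in x0,x1,x2) with m ≤ n, such that A has rank m at a generic point. For a point P ∈ P², the rank of A(P) drops below m if and only if all maximal minors of A vanish at P. Specialize: for the 3×4 matrix L(x) = [[x1,x1,x2,x2],[x2,ω x2,ω x0,x0],[ω x0,x0,x1,ω x1]] over ℂ with ω a primitive cube root of unity, L has rank 2 exactly at the six points (1,0,0), (0,1,0), (0,0,1), (1,1,1), (1,ω,ω²), (1,ω²,ω) of P². -/
/-!
A matrix with `m` rows has rank `< m` iff its rows are dependent; if they are independent, some
`m` of its columns are independent too, and they form a square submatrix with nonzero determinant.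

For `L(x) = fermatMatrix ω x` with `x = (a, b, c) ≠ 0`, the `2 × 2` minors include
`(ω - 1)·bc`, `(1 - ω)·ac`, `(1 - ω)·ab` and `ω²bc - a²`, `b² - ωac`, `ωab - c²`, so they cannot
all vanish and `rank L(x) ≥ 2`. The four maximal minors are `(ω - 1)` times cubics whose differences give
`b(bc - a²) = c(bc - a²) = a(ab - c²) = 0`: either two coordinates vanish, or `bc = a²`,
`ab = c²`, whence `b³ = a³` and `b/a`, `c/a` are cube roots of unity. Conversely, at each of the
six points an explicit row dependency of `L(x)` shows `rank L(x) < 3`.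
-/

open Matrix

namespace Matrix

variable {K m n o : Type*} [Field K] [Fintype n]

theorem det_submatrix_eq_zero_of_rank_lt [Fintype o] [DecidableEq o] (A : Matrix m n K)
    (r : o → m) (c : o → n) (h : A.rank < Fintype.card o) : (A.submatrix r c).det = 0 := by
  by_contra hdet
  have := rank_of_det_ne_zero hdet
  have := rank_submatrix_le A r c
  omega

theorem exists_injective_det_submatrix_ne_zero [Fintype m] [DecidableEq m] (A : Matrix m n K)
    (h : Fintype.card m ≤ A.rank) :
    ∃ f : m → n, Function.Injective f ∧ (A.submatrix id f).det ≠ 0 := by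
  obtain ⟨κ, a, ha, hspan, hli⟩ := exists_linearIndependent' K A.col
  have : Fintype κ := Fintype.ofInjective a ha
  have hcard : Fintype.card κ = Fintype.card m := by
    have := A.rank_le_card_height
    rw [A.rank_eq_finrank_span_cols, ← hspan, ← Set.finrank,
      ← linearIndependent_iff_card_eq_finrank_span.mp hli] at h this
    omega
  let e : m ≃ κ := Fintype.equivOfCardEq hcard.symm
  refine ⟨a ∘ e, ha.comp e.injective, ?_⟩
  rw [← isUnit_iff_ne_zero, ← isUnit_iff_isUnit_det, ← linearIndependent_cols_iff_isUnit]
  exact hli.comp e e.injective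

theorem rank_lt_card_height_iff [Fintype m] [DecidableEq m] (A : Matrix m n K) :
    A.rank < Fintype.card m ↔
      ∀ f : m → n, Function.Injective f → (A.submatrix id f).det = 0 := by
  refine ⟨fun h f _ ↦ A.det_submatrix_eq_zero_of_rank_lt id f h, fun h ↦ ?_⟩
  by_contra! hrank
  obtain ⟨f, hf, hdet⟩ := A.exists_injective_det_submatrix_ne_zero hrank
  exact hdet (h f hf)

theorem rank_lt_card_height_of_vecMul_eq_zero [Fintype m] [DecidableEq m] (A : Matrix m n K)
    {v : m → K} (hv : v ≠ 0) (hA : v ᵥ* A = 0) : A.rank < Fintype.card m := by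
  refine A.rank_lt_card_height_iff.mpr fun f _ ↦ exists_vecMul_eq_zero_iff.mp ⟨v, hv, ?_⟩
  funext j
  simpa [vecMul, dotProduct] using congrFun hA (f j)

theorem eq_smul_vec3 {x : Fin 3 → K} {t p₀ p₁ p₂ : K} (h₀ : x 0 = t * p₀) (h₁ : x 1 = t * p₁)
    (h₂ : x 2 = t * p₂) : x = t • ![p₀, p₁, p₂] := by
  funext i
  fin_cases i <;> simp [h₀, h₁, h₂]

end Matrix

variable {K : Type*} [Field K] {ω : K}

theorem IsPrimitiveRoot.sq_add_self_add_one (hω : IsPrimitiveRoot ω 3) : ω ^ 2 + ω + 1 = 0 := by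
  have := hω.geom_sum_eq_zero (by norm_num)
  simp only [Finset.sum_range_succ, Finset.sum_range_zero] at this
  linear_combination this

def fermatMatrix (ω : K) (x : Fin 3 → K) : Matrix (Fin 3) (Fin 4) K :=
  of ![![x 1, x 1, x 2, x 2],
       ![x 2, ω * x 2, ω * x 0, x 0],
       ![ω * x 0, x 0, x 1, ω * x 1]]

theorem two_le_rank_fermatMatrix (hω : IsPrimitiveRoot ω 3) {x : Fin 3 → K} (hx : x ≠ 0) :
    2 ≤ (fermatMatrix ω x).rank := by
  by_contra! h
  have minor (r : Fin 2 → Fin 3) (c : Fin 2 → Fin 4) :=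
    (fermatMatrix ω x).det_submatrix_eq_zero_of_rank_lt r c (by simpa using h)
  have h₁ := minor ![0, 1] ![0, 1]
  have h₂ := minor ![0, 1] ![2, 3]
  have h₃ := minor ![0, 2] ![0, 1]
  have h₄ := minor ![1, 2] ![1, 3]
  have h₅ := minor ![0, 2] ![0, 2]
  have h₆ := minor ![0, 1] ![0, 2]
  simp only [det_fin_two, fermatMatrix, Fin.isValue, submatrix_apply, cons_val_zero, of_apply,
    cons_val', cons_val_fin_one, cons_val_one, cons_val] at h₁ h₂ h₃ h₄ h₅ h₆
  have hω₁ : ω - 1 ≠ 0 := sub_ne_zero.mpr (hω.ne_one (by norm_num))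
  have hbc : x 1 * x 2 = 0 := by grind
  have hac : x 0 * x 2 = 0 := by grind
  have hab : x 0 * x 1 = 0 := by grind
  have ha : x 0 = 0 := pow_eq_zero_iff two_ne_zero |>.mp (by grind)
  have hb : x 1 = 0 := pow_eq_zero_iff two_ne_zero |>.mp (by grind)
  have hc : x 2 = 0 := pow_eq_zero_iff two_ne_zero |>.mp (by grind)
  exact hx (funext fun i ↦ by fin_cases i <;> assumption)

def IsOneOfSixPoints (ω : K) (x : Fin 3 → K) : Prop :=
  ∃ t : K, t ≠ 0 ∧
    (x = t • ![1, 0, 0] ∨ x = t • ![0, 1, 0] ∨ x = t • ![0, 0, 1] ∨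
     x = t • ![1, 1, 1] ∨ x = t • ![1, ω, ω ^ 2] ∨ x = t • ![1, ω ^ 2, ω])

theorem isOneOfSixPoints_of_cubics (hω : IsPrimitiveRoot ω 3) {x : Fin 3 → K} (hx : x ≠ 0)
    (h₁ : x 1 * (x 1 * x 2 - x 0 ^ 2) = 0) (h₂ : x 2 * (x 1 * x 2 - x 0 ^ 2) = 0)
    (h₃ : x 0 * (x 0 * x 1 - x 2 ^ 2) = 0) :
    IsOneOfSixPoints ω x := by
  have hq := hω.sq_add_self_add_one
  have hx₂ : x 0 = 0 → x 1 = 0 → x 2 ≠ 0 := fun ha hb hc ↦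
    hx (funext fun i ↦ by fin_cases i <;> assumption)
  by_cases ha : x 0 = 0
  · by_cases hb : x 1 = 0
    · exact ⟨x 2, hx₂ ha hb,
        .inr <| .inr <| .inl <| eq_smul_vec3 (by simp [ha]) (by simp [hb]) (by simp)⟩
    · have hc : x 2 = 0 := by grind
      exact ⟨x 1, hb, .inr <| .inl <| eq_smul_vec3 (by simp [ha]) (by simp) (by simp [hc])⟩
  by_cases hb : x 1 = 0
  · have hc : x 2 = 0 := by grind
    exact ⟨x 0, ha, .inl <| eq_smul_vec3 (by simp) (by simp [hb]) (by simp [hc])⟩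
  have hab : x 0 * x 1 = x 2 ^ 2 := by grind
  have hac : x 0 * x 2 = x 1 ^ 2 := by grind
  have hbc : x 1 * x 2 = x 0 ^ 2 := by grind
  have hcube : (x 1 - x 0) * (x 1 - ω * x 0) * (x 1 - ω ^ 2 * x 0) = 0 := by
    linear_combination -x 1 * hac + x 0 * hbc +
      (x 0 ^ 3 - x 0 * x 1 ^ 2 + ω * x 0 ^ 2 * x 1 - ω * x 0 ^ 3) * hq
  refine ⟨x 0, ha, .inr <| .inr <| .inr ?_⟩
  rcases mul_eq_zero.mp hcube with h | h
  · rcases mul_eq_zero.mp h with h | h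
    · exact .inl <| eq_smul_vec3 (by simp) (by grind) (by grind)
    · exact .inr <| .inl <| eq_smul_vec3 (by simp) (by grind) (by grind)
  · exact .inr <| .inr <| eq_smul_vec3 (by simp) (by grind) (by grind)

theorem isOneOfSixPoints_of_rank_fermatMatrix_lt_three (hω : IsPrimitiveRoot ω 3)
    {x : Fin 3 → K} (hx : x ≠ 0) (h : (fermatMatrix ω x).rank < 3) : IsOneOfSixPoints ω x := by
  have minor (c : Fin 3 → Fin 4) :=
    (fermatMatrix ω x).det_submatrix_eq_zero_of_rank_lt id c (by simpa using h)
  have h₁ := minor ![0, 1, 2]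
  have h₂ := minor ![0, 1, 3]
  have h₃ := minor ![0, 2, 3]
  have h₄ := minor ![1, 2, 3]
  simp only [fermatMatrix, Fin.isValue, det_fin_three, submatrix_apply, id_eq, cons_val_zero,
    of_apply, cons_val', cons_val_fin_one, cons_val_one, cons_val] at h₁ h₂ h₃ h₄
  have hq := hω.sq_add_self_add_one
  have hω₁ : ω - 1 ≠ 0 := sub_ne_zero.mpr (hω.ne_one (by norm_num))
  apply isOneOfSixPoints_of_cubics hω hx
  · grind
  · grind
  · grind

theorem rank_fermatMatrix_lt_three (hω : IsPrimitiveRoot ω 3) {x : Fin 3 → K}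
    (h : IsOneOfSixPoints ω x) : (fermatMatrix ω x).rank < 3 := by
  have hq := hω.sq_add_self_add_one
  suffices ∃ v ≠ 0, v ᵥ* fermatMatrix ω x = 0 by
    obtain ⟨v, hv, hvx⟩ := this
    simpa using (fermatMatrix ω x).rank_lt_card_height_of_vecMul_eq_zero hv hvx
  obtain ⟨t, -, hx⟩ := h
  rcases hx with rfl | rfl | rfl | rfl | rfl | rfl <;>
    [use ![1, 0, 0]; use ![0, 1, 0]; use ![0, 0, 1]; use ![1, ω, ω]; use ![1, 1, ω ^ 2];
      use ![1, ω ^ 2, 1]] <;>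
    refine ⟨by simp, ?_⟩ <;>
    funext j <;> fin_cases j <;> simp [fermatMatrix, vecMul, dotProduct, Fin.sum_univ_three] <;>
    grind

theorem rank_fermatMatrix_eq_two_iff (hω : IsPrimitiveRoot ω 3) {x : Fin 3 → K} (hx : x ≠ 0) :
    (fermatMatrix ω x).rank = 2 ↔ IsOneOfSixPoints ω x := by
  have := two_le_rank_fermatMatrix hω hx
  refine ⟨fun h ↦ isOneOfSixPoints_of_rank_fermatMatrix_lt_three hω hx (by omega), fun h ↦ ?_⟩
  have := rank_fermatMatrix_lt_three hω h
  omega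

/-- A 3×4 matrix of linear forms drops below full rank exactly where all its maximal
minors vanish; and the specific 3×4 matrix `L(x)` from the Fermat cubic has rank 2
exactly at the six points `(1,0,0), (0,1,0), (0,0,1), (1,1,1), (1,ω,ω²), (1,ω²,ω)`
of `P²`. -/
theorem stmt15 (ω : ℂ) (hω : IsPrimitiveRoot ω 3) :
    (∀ {K : Type} [Field K] (A : Matrix (Fin 3) (Fin 4) K),
      A.rank < 3 ↔ ∀ f : Fin 3 → Fin 4, Function.Injective f →
        (A.submatrix id f).det = 0) ∧
    (∀ x : Fin 3 → ℂ, x ≠ 0 →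
      (((Matrix.of ![![x 1, x 1, x 2, x 2],
            ![x 2, ω * x 2, ω * x 0, x 0],
            ![ω * x 0, x 0, x 1, ω * x 1]]) : Matrix (Fin 3) (Fin 4) ℂ).rank = 2 ↔
        ∃ t : ℂ, t ≠ 0 ∧
          (x = t • ![1, 0, 0] ∨ x = t • ![0, 1, 0] ∨ x = t • ![0, 0, 1] ∨
           x = t • ![1, 1, 1] ∨ x = t • ![1, ω, ω ^ 2] ∨ x = t • ![1, ω ^ 2, ω]))) :=
  ⟨fun A ↦ by simpa using A.rank_lt_card_height_iff,
    fun _ hx ↦ rank_fermatMatrix_eq_two_iff hω hx⟩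
end
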